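/- (Internal consistency of the MIS/RMIS tableau.) Under the MIS/RMIS tableau setup, assume (b^I)^⊺𝟙 = 1, A^I 𝟙 = c^I, A^O 𝟙_{s^O} = c^O, and (b^O)^⊺𝟙_{s^O} = 1. Then the GARK internal consistency conditions hold: for every fast stage index j = 1,…,s^O s^I, the j-th row sum of A^{f,f} and the j-th row sum of A^{f,s} both equal the j-th entry of c^f; and for every slow stage index i = 1,…,s^O, the i-th row sum of A^{s,f} and the i-th row sum of A^{s,s} both equal c^O_i. -/
import Mathlib


open Matrix BigOperators Finset

/-- The increments `d_j = c^O_{j+1} - c^O_j` (with `d_{s^O} = 1 - c^O_{s^O}`). -/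
noncomputable def misD (sO : ℕ) (cO : Fin sO → ℝ) (j : Fin sO) : ℝ :=
  if h : j.val + 1 < sO then cO ⟨j.val + 1, h⟩ - cO j else 1 - cO j

/-- The fast-fast GARK coefficient matrix `A^{f,f}` of the MIS/RMIS tableau. -/
noncomputable def misAff (sI sO : ℕ) (AI : Matrix (Fin sI) (Fin sI) ℝ)
    (bI : Fin sI → ℝ) (cO : Fin sO → ℝ) :
    Matrix (Fin sO × Fin sI) (Fin sO × Fin sI) ℝ :=
  fun ip jq =>
    if jq.1 < ip.1 then misD sO cO jq.1 * bI jq.2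
    else if jq.1 = ip.1 then misD sO cO ip.1 * AI ip.2 jq.2
    else 0

/-- The slow-fast GARK coefficient matrix `A^{s,f}` of the MIS/RMIS tableau. -/
noncomputable def misAsf (sI sO : ℕ) (bI : Fin sI → ℝ) (cO : Fin sO → ℝ) :
    Matrix (Fin sO) (Fin sO × Fin sI) ℝ :=
  fun i jq => if jq.1 < i then misD sO cO jq.1 * bI jq.2 else 0

/-- The fast-slow GARK coefficient matrix `A^{f,s}` of the MIS/RMIS tableau. -/
noncomputable def misAfs (sI sO : ℕ) (cI : Fin sI → ℝ)
    (AO : Matrix (Fin sO) (Fin sO) ℝ) (bO : Fin sO → ℝ) :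
    Matrix (Fin sO × Fin sI) (Fin sO) ℝ :=
  fun ip j =>
    if ip.1.val = 0 then
      (if h : 1 < sO then cI ip.2 * AO ⟨1, h⟩ j else 0)
    else if h : ip.1.val + 1 < sO then
      AO ip.1 j + cI ip.2 * (AO ⟨ip.1.val + 1, h⟩ j - AO ip.1 j)
    else
      AO ip.1 j + cI ip.2 * (bO j - AO ip.1 j)

/-- The fast abscissae `c^f` of the MIS/RMIS tableau. -/
noncomputable def misCf (sI sO : ℕ) (cI : Fin sI → ℝ) (cO : Fin sO → ℝ) :
    Fin sO × Fin sI → ℝ :=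
  fun ip => cO ip.1 + misD sO cO ip.1 * cI ip.2

/-- The RMIS fast weights `b^f` (i-th block is `b^O_i e_1`). -/
noncomputable def misBf (sI sO : ℕ) (bO : Fin sO → ℝ) : Fin sO × Fin sI → ℝ :=
  fun ip => if ip.2.val = 0 then bO ip.1 else 0

/-- The vector `v^O` appearing in the fourth-order RMIS condition. -/
noncomputable def misV (sO : ℕ) (bO cO : Fin sO → ℝ) (i : Fin sO) : ℝ :=
  if i.val = 0 then 0
  else if h : i.val + 1 < sO then
    bO i * (cO i - cO ⟨i.val - 1, by have := i.isLt; omega⟩) +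
      (cO ⟨i.val + 1, h⟩ - cO ⟨i.val - 1, by have := i.isLt; omega⟩) *
        ∑ j ∈ Finset.univ.filter (fun j => i < j), bO j
  else bO i * (cO i - cO ⟨i.val - 1, by have := i.isLt; omega⟩)


lemma misD_tele (sO : ℕ) (cO : Fin sO → ℝ)
    (hcO1 : ∀ h : 0 < sO, cO ⟨0, h⟩ = 0) :
    ∀ (n : ℕ) (hn : n < sO),
      ∑ j ∈ Finset.range n, (if h : j < sO then misD sO cO ⟨j, h⟩ else 0)
        = cO ⟨n, hn⟩ := by
  intro n
  induction n with
  | zero => intro hn; simpa using (hcO1 hn).symm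
  | succ n ih =>
    intro hn
    rw [Finset.sum_range_succ, ih (by omega), dif_pos (by omega : n < sO)]
    unfold misD
    rw [dif_pos (show (⟨n, by omega⟩ : Fin sO).val + 1 < sO from hn)]
    ring_nf

lemma misD_sumIf (sO : ℕ) (cO : Fin sO → ℝ)
    (hcO1 : ∀ h : 0 < sO, cO ⟨0, h⟩ = 0) (i : Fin sO) :
    ∑ j : Fin sO, (if j < i then misD sO cO j else 0) = cO i := by
  have key : ∑ j : Fin sO, (if j < i then misD sO cO j else 0)
      = ∑ j ∈ Finset.range sO,
          (if h : j < sO then (if j < i.val then misD sO cO ⟨j, h⟩ else 0) else 0) := by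
    rw [← Fin.sum_univ_eq_sum_range]
    refine Finset.sum_congr rfl fun j _ => ?_
    rw [dif_pos j.isLt]
    congr 1
  rw [key]
  rw [← Finset.sum_subset (Finset.range_subset_range.mpr (le_of_lt i.isLt))]
  · rw [← misD_tele sO cO hcO1 i.val i.isLt]
    refine Finset.sum_congr rfl fun j hj => ?_
    have hji : j < i.val := Finset.mem_range.mp hj
    rw [dif_pos (by omega : j < sO), if_pos hji, dif_pos (by omega : j < sO)]
  · intro j _ hj
    have : ¬ j < i.val := fun h => hj (Finset.mem_range.mpr h)
    split_ifs <;> simp_all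

/-- Internal consistency of the MIS/RMIS tableau: the row sums of
`A^{f,f}` and `A^{f,s}` both equal `c^f`, and the row sums of `A^{s,f}` and
`A^{s,s} = A^O` both equal `c^O`. -/
theorem rmis_internal_consistency (sI sO : ℕ) (hsI : 1 ≤ sI) (hsO : 2 ≤ sO)
    (AI : Matrix (Fin sI) (Fin sI) ℝ) (bI cI : Fin sI → ℝ)
    (AO : Matrix (Fin sO) (Fin sO) ℝ) (bO cO : Fin sO → ℝ)
    (hcO1 : cO ⟨0, by omega⟩ = 0)
    (hbI1 : ∑ q, bI q = 1)
    (hAIrow : ∀ p, ∑ q, AI p q = cI p)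
    (hAOrow : ∀ i, ∑ j, AO i j = cO i)
    (hbO1 : ∑ i, bO i = 1) :
    (∀ jq : Fin sO × Fin sI,
        ∑ kr, misAff sI sO AI bI cO jq kr = misCf sI sO cI cO jq) ∧
    (∀ jq : Fin sO × Fin sI,
        ∑ j, misAfs sI sO cI AO bO jq j = misCf sI sO cI cO jq) ∧
    (∀ i : Fin sO, ∑ jq, misAsf sI sO bI cO i jq = cO i) ∧
    (∀ i : Fin sO, ∑ j, AO i j = cO i) := by
  have hcO0 : ∀ h : 0 < sO, cO ⟨0, h⟩ = 0 := fun _ => hcO1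
  refine ⟨?_, ?_, ?_, hAOrow⟩
  · rintro ⟨i, p⟩
    rw [Fintype.sum_prod_type]
    have inner : ∀ k : Fin sO,
        ∑ r : Fin sI, misAff sI sO AI bI cO (i, p) (k, r)
          = (if k < i then misD sO cO k else 0)
            + (if k = i then misD sO cO i * cI p else 0) := by
      intro k
      unfold misAff
      by_cases h1 : k < i
      · simp only [h1, if_true, if_neg (ne_of_lt h1), add_zero,
          ← Finset.mul_sum, hbI1, mul_one]
      · by_cases h2 : k = i
        · simp only [h1, if_false, h2, if_true, zero_add, lt_irrefl,
            ← Finset.mul_sum, hAIrow]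
        · simp [h1, h2]
    rw [Finset.sum_congr rfl (fun k _ => inner k), Finset.sum_add_distrib,
      misD_sumIf sO cO hcO0 i, Finset.sum_ite_eq' Finset.univ i
        (fun _ => misD sO cO i * cI p), if_pos (Finset.mem_univ i)]
    rfl
  · rintro ⟨i, p⟩
    unfold misAfs misCf
    simp only
    by_cases h0 : i.val = 0
    · have hi : i = ⟨0, by omega⟩ := Fin.ext h0
      simp only [h0, if_true, dif_pos (by omega : 1 < sO), ← Finset.mul_sum,
        hAOrow, hi, hcO1, zero_add]
      unfold misD
      rw [dif_pos (by omega : (⟨0, by omega⟩ : Fin sO).val + 1 < sO)]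
      rw [hcO1]
      ring
    · by_cases h1 : i.val + 1 < sO
      · simp only [h0, if_false, dif_pos h1]
        rw [Finset.sum_add_distrib, hAOrow, ← Finset.mul_sum,
          Finset.sum_sub_distrib, hAOrow, hAOrow]
        unfold misD
        rw [dif_pos h1]
        ring
      · simp only [h0, if_false, dif_neg h1]
        rw [Finset.sum_add_distrib, hAOrow, ← Finset.mul_sum,
          Finset.sum_sub_distrib, hbO1, hAOrow]
        unfold misD
        rw [dif_neg h1]
        ring
  · intro i
    rw [Fintype.sum_prod_type]
    have inner : ∀ k : Fin sO,
        ∑ r : Fin sI, misAsf sI sO bI cO i (k, r)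
          = (if k < i then misD sO cO k else 0) := by
      intro k
      unfold misAsf
      by_cases h1 : k < i
      · simp only [h1, if_true, ← Finset.mul_sum, hbI1, mul_one]
      · simp [h1]
    rw [Finset.sum_congr rfl (fun k _ => inner k), misD_sumIf sO cO hcO0 i]
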